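/- The tpCN proposal density from x to x' is κ_t(x, x') = (γ₁/ρ^d)((d+ν)/(ν+⟨x,x⟩_s))^{d/2} [1 + (ρ²(ν+⟨x,x⟩_s))^{-1}(⟨x',x'⟩_s + (1−ρ²)⟨x,x⟩_s − 2√(1−ρ²)⟨x,x'⟩_s)]^{−(2d+ν)/2}, for a normalizing constant γ₁ depending only on d, ν, and C_s. -/

import Mathlib

open Matrix Real MeasureTheory

/-- Multivariate Gaussian density with mean `m` and covariance `S` on `ℝ^d`. -/
noncomputable def gaussPdf (d : ℕ) (m : Fin d → ℝ) (S : Matrix (Fin d) (Fin d) ℝ)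
    (x : Fin d → ℝ) : ℝ :=
  (Real.sqrt ((2 * Real.pi) ^ d * S.det))⁻¹ *
    Real.exp (-(1 / 2) * ((x - m) ⬝ᵥ (S⁻¹ *ᵥ (x - m))))

/-- The inner product `⟨x₁, x₂⟩_s = (x₁ − μ_s)ᵀ C_s⁻¹ (x₂ − μ_s)`. -/
noncomputable def innerS (d : ℕ) (μs : Fin d → ℝ) (Cs : Matrix (Fin d) (Fin d) ℝ)
    (x₁ x₂ : Fin d → ℝ) : ℝ :=
  (x₁ - μs) ⬝ᵥ (Cs⁻¹ *ᵥ (x₂ - μs))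

/-- Density of `Z` when `Z⁻¹ ∼ Gamma(shape k, scale θ)`. -/
noncomputable def invGammaPdf (k θ z : ℝ) : ℝ :=
  if 0 < z then z ^ (-(k + 1)) * Real.exp (-1 / (θ * z)) / (Real.Gamma k * θ ^ k) else 0

/-- The tpCN proposal density from `x` to `x'`: a scale mixture of Gaussians, the
proposal being `x' = μ_s + √(1−ρ²)(x−μ_s) + ρ√Z W` with
`Z⁻¹ ∼ Gamma((d+ν)/2, 2/(ν+⟨x,x⟩_s))` and `W ∼ N(0, C_s)`. -/
noncomputable def tpcnPdf (d : ℕ) (ν : ℝ) (μs : Fin d → ℝ)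
    (Cs : Matrix (Fin d) (Fin d) ℝ) (ρ : ℝ) (x x' : Fin d → ℝ) : ℝ :=
  ∫ z in Set.Ioi (0 : ℝ),
    gaussPdf d (μs + Real.sqrt (1 - ρ ^ 2) • (x - μs)) ((ρ ^ 2 * z) • Cs) x' *
      invGammaPdf (((d : ℝ) + ν) / 2) (2 / (ν + innerS d μs Cs x x)) z

/-
Given `Z = z`, the proposal is Gaussian with covariance `ρ² z C_s`, whose density is
`(ρ² z)^{-d/2}` times the `N(0, C_s)` normaliser times `exp(-Q / (2ρ² z))`, where `Q` is the
`C_s⁻¹`-quadratic form of `x' − μ_s − √(1−ρ²)(x−μ_s)`. Against the inverse-gamma density this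
leaves an integrand `z^{-s-1} e^{-c/z}` up to constants, with `s = (2d+ν)/2`, and
`∫₀^∞ z^{-s-1} e^{-c/z} dz = Γ(s) c^{-s}` by the substitution `z ↦ 1/z` in Euler's integral.
Expanding `Q` bilinearly in `⟨·,·⟩_s` gives the Student-t form.
-/

lemma integral_rpow_neg_sub_one_mul_exp_neg_div {s c : ℝ} (hs : 0 < s) (hc : 0 < c) :
    ∫ z in Set.Ioi (0 : ℝ), z ^ (-s - 1) * exp (-c / z) = Gamma s * c ^ (-s) := by
  have euler : ∫ y in Set.Ioi (0 : ℝ), y ^ (s - 1) * exp (-c * y) = Gamma s * c ^ (-s) := by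
    have := integral_rpow_mul_exp_neg_mul_rpow (p := 1) (q := s - 1) one_pos (by linarith) hc
    simp only [rpow_one, div_one, sub_add_cancel] at this
    rw [this]
    ring
  rw [← euler, ← integral_comp_rpow_Ioi (fun y ↦ y ^ (s - 1) * exp (-c * y)) (p := -1)
    (by norm_num)]
  refine setIntegral_congr_fun measurableSet_Ioi fun z (hz : 0 < z) ↦ ?_
  rw [smul_eq_mul, rpow_neg_one, inv_rpow hz.le, ← rpow_neg hz.le, abs_neg, abs_one, one_mul,
    ← mul_assoc, ← rpow_add hz, div_eq_mul_inv]
  ring_nf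

section innerS

variable {d : ℕ} {μs : Fin d → ℝ} {Cs : Matrix (Fin d) (Fin d) ℝ}

lemma innerS_comm (hCs : Cs.IsSymm) (x y : Fin d → ℝ) :
    innerS d μs Cs x y = innerS d μs Cs y x := by
  rw [innerS, dotProduct_mulVec, ← mulVec_transpose, hCs.inv.eq, dotProduct_comm, innerS]

lemma innerS_self_nonneg (hCs : Cs.PosDef) (x : Fin d → ℝ) : 0 ≤ innerS d μs Cs x x := by
  rw [innerS]
  simpa only [star_trivial] using hCs.inv.posSemidef.dotProduct_mulVec_nonneg (x - μs)

lemma innerS_add_smul_sub_self (hCs : Cs.IsSymm) (t : ℝ) (x x' : Fin d → ℝ) :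
    innerS d (μs + t • (x - μs)) Cs x' x' =
      innerS d μs Cs x' x' + t ^ 2 * innerS d μs Cs x x - 2 * t * innerS d μs Cs x x' := by
  have hsymm := innerS_comm (μs := μs) hCs x' x
  unfold innerS at hsymm ⊢
  rw [show x' - (μs + t • (x - μs)) = (x' - μs) - t • (x - μs) by abel]
  generalize x' - μs = u, x - μs = v at hsymm ⊢
  simp only [mulVec_sub, mulVec_smul, sub_dotProduct, dotProduct_sub, dotProduct_smul,
    smul_dotProduct, smul_eq_mul]
  rw [hsymm]
  ring

end innerS

lemma gaussPdf_smul {d : ℕ} {S : Matrix (Fin d) (Fin d) ℝ} (hS : IsUnit S.det) {t : ℝ}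
    (ht : 0 < t) (m y : Fin d → ℝ) :
    gaussPdf d m (t • S) y =
      t ^ (-((d : ℝ) / 2)) * (√((2 * π) ^ d * S.det))⁻¹ *
        exp (-(innerS d m S y y / (2 * t))) := by
  have : Invertible t := invertibleOfNonzero ht.ne'
  have hsqrt : √((2 * π) ^ d * (t ^ d * S.det)) = √((2 * π) ^ d * S.det) * t ^ ((d : ℝ) / 2) := by
    rw [mul_left_comm, mul_comm, sqrt_mul' _ (by positivity)]
    congr 1
    rw [sqrt_eq_rpow, ← rpow_natCast, ← rpow_mul ht.le, mul_one_div]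
  rw [gaussPdf, det_smul, Fintype.card_fin, inv_smul (A := S) t hS, invOf_eq_inv, smul_mulVec,
    dotProduct_smul, smul_eq_mul, hsqrt, mul_inv, rpow_neg ht.le, innerS]
  ring_nf

theorem integral_gaussPdf_smul_mul_invGammaPdf {d : ℕ} {S : Matrix (Fin d) (Fin d) ℝ}
    (hS : S.PosDef) {k θ r : ℝ} (hk : 0 < k) (hθ : 0 < θ) (hr : 0 < r) (m y : Fin d → ℝ) :
    ∫ z in Set.Ioi (0 : ℝ), gaussPdf d m ((r * z) • S) y * invGammaPdf k θ z =
      (√((2 * π) ^ d * S.det))⁻¹ * (Gamma (k + d / 2) / Gamma k) * r ^ (-((d : ℝ) / 2)) *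
        θ ^ ((d : ℝ) / 2) * (1 + θ * innerS d m S y y / (2 * r)) ^ (-(k + d / 2)) := by
  set q := innerS d m S y y
  have hq : 0 ≤ q := innerS_self_nonneg hS y
  have integrand : ∀ z ∈ Set.Ioi (0 : ℝ), gaussPdf d m ((r * z) • S) y * invGammaPdf k θ z =
      (√((2 * π) ^ d * S.det))⁻¹ * r ^ (-((d : ℝ) / 2)) / (Gamma k * θ ^ k) *
        (z ^ (-(k + d / 2) - 1) * exp (-(q / (2 * r) + 1 / θ) / z)) := by
    intro z (hz : 0 < z)
    have hexp : exp (-(q / (2 * (r * z)))) * exp (-1 / (θ * z)) =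
        exp (-(q / (2 * r) + 1 / θ) / z) := by
      rw [← exp_add]
      congr 1
      field_simp
      ring
    have hpow : z ^ (-((d : ℝ) / 2)) * z ^ (-(k + 1)) = z ^ (-(k + d / 2) - 1) := by
      rw [← rpow_add hz]
      ring_nf
    rw [gaussPdf_smul hS.det_pos.ne'.isUnit (by positivity), invGammaPdf, if_pos hz,
      mul_rpow hr.le hz.le, ← hexp, ← hpow]
    ring
  rw [setIntegral_congr_fun measurableSet_Ioi integrand, integral_const_mul,
    integral_rpow_neg_sub_one_mul_exp_neg_div (by positivity) (by positivity)]
  have hbase : q / (2 * r) + 1 / θ = θ⁻¹ * (1 + θ * q / (2 * r)) := by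
    field_simp
    ring
  have hθpow : θ ^ (k + d / 2) / θ ^ k = θ ^ ((d : ℝ) / 2) := by
    rw [← rpow_sub hθ]
    ring_nf
  rw [hbase, mul_rpow (by positivity) (by positivity), inv_rpow hθ.le, ← rpow_neg hθ.le, neg_neg,
    ← hθpow]
  field_simp

theorem tpCN_proposal_density_general (d : ℕ) (ν : ℝ) (hν : 0 < ν)
    (μs : Fin d → ℝ) (Cs : Matrix (Fin d) (Fin d) ℝ) (hCs : Cs.PosDef) :
    ∃ γ₁ : ℝ, 0 < γ₁ ∧ ∀ ρ : ℝ, ρ ∈ Set.Ioo (0 : ℝ) 1 → ∀ x x' : Fin d → ℝ,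
      tpcnPdf d ν μs Cs ρ x x' =
        γ₁ / ρ ^ d * (((d : ℝ) + ν) / (ν + innerS d μs Cs x x)) ^ ((d : ℝ) / 2) *
          (1 + (ρ ^ 2 * (ν + innerS d μs Cs x x))⁻¹ *
              (innerS d μs Cs x' x' + (1 - ρ ^ 2) * innerS d μs Cs x x -
                2 * Real.sqrt (1 - ρ ^ 2) * innerS d μs Cs x x')) ^
            (-((2 * (d : ℝ) + ν) / 2)) := by
  have hdet := hCs.det_pos
  refine ⟨(√((2 * π) ^ d * Cs.det))⁻¹ * (Gamma ((2 * d + ν) / 2) / Gamma ((d + ν) / 2)) *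
    (2 / (d + ν)) ^ ((d : ℝ) / 2), by positivity, fun ρ ⟨hρ0, hρ1⟩ x x' ↦ ?_⟩
  set a := ν + innerS d μs Cs x x
  have ha : 0 < a := add_pos_of_pos_of_nonneg hν (innerS_self_nonneg hCs x)
  have hshape : ((d : ℝ) + ν) / 2 + d / 2 = (2 * d + ν) / 2 := by ring
  have hρpow : (ρ ^ 2) ^ (-((d : ℝ) / 2)) = (ρ ^ d)⁻¹ := by
    rw [rpow_neg (by positivity), ← rpow_natCast, ← rpow_mul hρ0.le, ← rpow_natCast]
    ring_nf
  have hscale : (2 / a) ^ ((d : ℝ) / 2) =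
      (2 / (d + ν)) ^ ((d : ℝ) / 2) * ((d + ν) / a) ^ ((d : ℝ) / 2) := by
    rw [← mul_rpow (by positivity) (by positivity)]
    field_simp
  have hbase : ∀ Q : ℝ, 2 / a * Q / (2 * ρ ^ 2) = (ρ ^ 2 * a)⁻¹ * Q := fun Q ↦ by
    field_simp
  rw [tpcnPdf, integral_gaussPdf_smul_mul_invGammaPdf hCs (by positivity) (by positivity)
    (by positivity), hshape, innerS_add_smul_sub_self (isHermitian_iff_isSymm.mp hCs.isHermitian),
    sq_sqrt (by nlinarith), hρpow, hscale, hbase]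
  ring

/-- Closed form of the tpCN proposal density: there is a normalizing constant `γ₁`
(depending only on `d`, `ν` and `C_s`) such that
`κ_t(x, x') = (γ₁/ρ^d)((d+ν)/(ν+⟨x,x⟩_s))^{d/2}
  [1 + (ρ²(ν+⟨x,x⟩_s))⁻¹(⟨x',x'⟩_s + (1−ρ²)⟨x,x⟩_s − 2√(1−ρ²)⟨x,x'⟩_s)]^{−(2d+ν)/2}`. -/
theorem tpCN_proposal_density (d : ℕ) (hd : 1 ≤ d) (ν : ℝ) (hν : 0 < ν)
    (μs : Fin d → ℝ) (Cs : Matrix (Fin d) (Fin d) ℝ) (hCs : Cs.PosDef) :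
    ∃ γ₁ : ℝ, 0 < γ₁ ∧ ∀ ρ : ℝ, ρ ∈ Set.Ioo (0 : ℝ) 1 → ∀ x x' : Fin d → ℝ,
      tpcnPdf d ν μs Cs ρ x x' =
        γ₁ / ρ ^ d * (((d : ℝ) + ν) / (ν + innerS d μs Cs x x)) ^ ((d : ℝ) / 2) *
          (1 + (ρ ^ 2 * (ν + innerS d μs Cs x x))⁻¹ *
              (innerS d μs Cs x' x' + (1 - ρ ^ 2) * innerS d μs Cs x x -
                2 * Real.sqrt (1 - ρ ^ 2) * innerS d μs Cs x x')) ^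
            (-((2 * (d : ℝ) + ν) / 2)) :=
  tpCN_proposal_density_general d ν hν μs Cs hCs
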